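/- A finite set of constraints of the form x < y, x ≤ y, x = y, x ≠ y over variables valued in ℚ is satisfiable if and only if, after replacing each constraint x = y by the pair x ≤ y, y ≤ x and each x < y by the pair x ≤ y, x ≠ y, the following holds: for every constraint x ≠ y, the vertices x and y are not in the same strongly connected component of the directed graph whose arcs are the ≤-constraints. -/

import Mathlib

/-- The four Point Algebra relations. -/
inductive PARel | lt | le | eq | ne
deriving DecidableEq

/-- Satisfaction of a Point Algebra constraint by an assignment `α : V → ℚ`. -/
def PASat {V : Type} (α : V → ℚ) : PARel × V × V → Prop
  | (.lt, x, y) => α x < α y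
  | (.le, x, y) => α x ≤ α y
  | (.eq, x, y) => α x = α y
  | (.ne, x, y) => α x ≠ α y

/-- Arcs of the digraph of ≤-constraints after replacing `x = y` by `x ≤ y, y ≤ x`
and `x < y` by `x ≤ y, x ≠ y`. -/
def leqArc {V : Type} (C : Finset (PARel × V × V)) (u v : V) : Prop :=
  (.le, u, v) ∈ C ∨ (.lt, u, v) ∈ C ∨ (.eq, u, v) ∈ C ∨ (.eq, v, u) ∈ C

/-!
Any satisfying assignment is monotone along ≤-paths, so it identifies strongly connected
vertices and violates every `≠` or `<` between them. Conversely, reachability is a preorder on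
the variables; its antisymmetrization (the condensation of the digraph) is a finite partial order,
and a linear extension of it embeds in `ℚ` like every countable linear order. The resulting
assignment satisfies every ≤-arc and separates any two vertices lying in different strongly
connected components.
-/

open Relation

theorem exists_monotone_rat_eq_imp_antisymmRel {α : Type*} [Preorder α] [Countable α] :
    ∃ f : α → ℚ, Monotone f ∧ ∀ a b, f a = f b → AntisymmRel (· ≤ ·) a b := by
  have : Countable (LinearExtension (Antisymmetrization α (· ≤ ·))) :=
    inferInstanceAs (Countable (Quotient _))
  obtain ⟨e⟩ := Order.embedding_from_countable_to_dense
    (α := LinearExtension (Antisymmetrization α (· ≤ ·))) (β := ℚ)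
  exact ⟨e ∘ toLinearExtension ∘ toAntisymmetrization (· ≤ ·),
    e.monotone.comp (toLinearExtension.monotone.comp toAntisymmetrization_mono),
    fun a b h => Quotient.exact (e.injective h)⟩

theorem Relation.exists_rat_monotone_reflTransGen_separating {V : Type*} [Countable V]
    (r : V → V → Prop) :
    ∃ f : V → ℚ, (∀ a b, ReflTransGen r a b → f a ≤ f b) ∧
      ∀ a b, f a = f b → ReflTransGen r a b ∧ ReflTransGen r b a :=
  letI : Preorder V :=
    { le := ReflTransGen r, le_refl := fun _ => .refl, le_trans := fun _ _ _ => .trans }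
  exists_monotone_rat_eq_imp_antisymmRel

section PointAlgebra

variable {V : Type} {C : Finset (PARel × V × V)} {α : V → ℚ}

theorem le_of_leqArc (hα : ∀ c ∈ C, PASat α c) {u v : V} (h : leqArc C u v) :
    α u ≤ α v := by
  rcases h with h | h | h | h
  · exact hα _ h
  · exact (hα _ h).le
  · exact (hα _ h).le
  · exact (hα _ h).ge

theorem le_of_reflTransGen_leqArc (hα : ∀ c ∈ C, PASat α c) {u v : V}
    (h : ReflTransGen (leqArc C) u v) : α u ≤ α v := by
  simpa only [reflTransGen_eq_self] using
    ReflTransGen.lift α (p := (· ≤ ·)) (fun _ _ => le_of_leqArc hα) _ _ h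

end PointAlgebra

/-- A finite set of Point Algebra constraints over ℚ-valued variables is satisfiable iff,
after the replacement, for every ≠-constraint its endpoints are not strongly connected
in the digraph of ≤-constraints. -/
theorem pointAlgebra_satisfiable_iff {V : Type} [Fintype V]
    (C : Finset (PARel × V × V)) :
    (∃ α : V → ℚ, ∀ c ∈ C, PASat α c) ↔
      ∀ x y : V, ((.ne, x, y) ∈ C ∨ (.lt, x, y) ∈ C) →
        ¬ (Relation.ReflTransGen (leqArc C) x y ∧ Relation.ReflTransGen (leqArc C) y x) := by
  constructor
  · rintro ⟨α, hα⟩ x y hxy ⟨hxy', hyx'⟩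
    have heq : α x = α y :=
      le_antisymm (le_of_reflTransGen_leqArc hα hxy') (le_of_reflTransGen_leqArc hα hyx')
    rcases hxy with h | h
    · exact hα _ h heq
    · exact (hα _ h).ne heq
  · intro H
    obtain ⟨f, hmono, hsep⟩ := exists_rat_monotone_reflTransGen_separating (leqArc C)
    have hne (x y : V) (h : (.ne, x, y) ∈ C ∨ (.lt, x, y) ∈ C) : f x ≠ f y :=
      fun heq => H x y h (hsep x y heq)
    refine ⟨f, ?_⟩
    rintro ⟨_ | _ | _ | _, x, y⟩ hc
    · exact (hmono _ _ (.single (Or.inr (Or.inl hc)))).lt_of_ne (hne x y (Or.inr hc))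
    · exact hmono _ _ (.single (Or.inl hc))
    · exact le_antisymm (hmono _ _ (.single (Or.inr (Or.inr (Or.inl hc)))))
        (hmono _ _ (.single (Or.inr (Or.inr (Or.inr hc)))))
    · exact hne x y (Or.inl hc)
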